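/- Let N ≥ 0 be an even integer, let n > N be an integer, and set α = n − N − 1. Then ∫₀^∞ x^{(α−1)/2} · e^{−x/2} · L_N^{α}(x) dx = 2^{(3−α)/2} · Γ(n) · Γ((N+3)/2) / ( (N+1) · Γ(N+1) · Γ((n+1)/2) ). -/

import Mathlib

open Real MeasureTheory Set

/-- Generalized Laguerre polynomial
L_N^α(x) = Σ_{k=0}^N (−1)^k · Γ(N+α+1)/(Γ(k+α+1)·(N−k)!·k!) · x^k. -/
noncomputable def laguerreL (N : ℕ) (α : ℝ) (x : ℝ) : ℝ :=
  ∑ k ∈ Finset.range (N + 1),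
    (-1 : ℝ) ^ k *
      (Real.Gamma ((N : ℝ) + α + 1) /
        (Real.Gamma ((k : ℝ) + α + 1) * (Nat.factorial (N - k)) * (Nat.factorial k))) *
      x ^ k

/-! Expanding `L_N^{2b-1}` termwise against the Gamma weight `x^(b-1) e^(-x/2)` reduces the
integral to `2^b Γ(N+2b)/N! · S_N` with `S_N = ∑ₖ (-2)^k (N choose k) Γ(k+b)/Γ(k+2b)`.
By the beta integral, `S_N = Γ(b)⁻¹ ∫₀¹ (t(1-t))^(b-1) (1-2t)^N dt`, and an integration by parts
gives `(2b+N+1) S_{N+2} = (N+1) S_N`; this recurrence is equally a finite telescoping identity.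
Starting from `S_0 = Γ(b)/Γ(2b)` and Legendre's duplication formula,
`S_{2m} = 2^(1-2b) Γ(m+1/2)/Γ(b+m+1/2)`. -/

open Finset
open scoped Nat

def binomialSum (x : ℝ) (N : ℕ) (f : ℕ → ℝ) : ℝ :=
  ∑ k ∈ range (N + 1), x ^ k * N.choose k * f k

theorem binomialSum_succ (x : ℝ) (N : ℕ) (f : ℕ → ℝ) :
    binomialSum x (N + 1) f = binomialSum x N f + x * binomialSum x N (fun k => f (k + 1)) := by
  have hlast : binomialSum x N f = ∑ k ∈ range (N + 2), x ^ k * N.choose k * f k := by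
    rw [sum_range_succ _ (N + 1), Nat.choose_succ_self]; simp [binomialSum]
  rw [hlast, binomialSum, binomialSum, sum_range_succ' _ (N + 1), sum_range_succ' _ (N + 1),
    mul_sum, add_right_comm, ← sum_add_distrib]
  congr 1
  · refine sum_congr rfl fun k _ => ?_
    rw [Nat.choose_succ_succ']
    push_cast
    ring
  · simp

theorem binomialSum_add_two (x : ℝ) (N : ℕ) (f : ℕ → ℝ) :
    binomialSum x (N + 2) f = binomialSum x N f + 2 * x * binomialSum x N (fun k => f (k + 1))
      + x ^ 2 * binomialSum x N (fun k => f (k + 2)) := by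
  rw [binomialSum_succ, binomialSum_succ, binomialSum_succ]
  ring

noncomputable def gammaRatio (b : ℝ) (k : ℕ) : ℝ := Gamma (k + b) / Gamma (k + 2 * b)

theorem gammaRatio_succ {b : ℝ} (hb : 0 < b) (k : ℕ) :
    gammaRatio b (k + 1) = (k + b) / (k + 2 * b) * gammaRatio b k := by
  have hk : (0 : ℝ) < k + 2 * b := by positivity
  simp only [gammaRatio]
  push_cast
  rw [add_right_comm, Gamma_add_one (by positivity), add_right_comm, Gamma_add_one hk.ne']
  field_simp [(Gamma_pos_of_pos hk).ne']

theorem integral_rpow_mul_exp_neg_half {a : ℝ} (ha : 0 < a) :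
    ∫ x in Ioi (0 : ℝ), x ^ (a - 1) * exp (-x / 2) = 2 ^ a * Gamma a := by
  have := integral_rpow_mul_exp_neg_mul_Ioi ha one_half_pos
  rw [one_div_one_div] at this
  rw [← this]
  congr 2 with x
  ring_nf

theorem binomialSum_gammaRatio_contiguous {b : ℝ} (hb : 0 < b) (N : ℕ) :
    2 * b * binomialSum (-2) N (gammaRatio b)
      - 4 * (2 * b + N + 1) * (binomialSum (-2) N (fun k => gammaRatio b (k + 1))
        - binomialSum (-2) N (fun k => gammaRatio b (k + 2))) = 0 := by
  set G : ℕ → ℝ := fun k => 2 * b * k / (k + 2 * b) * (-2) ^ k * N.choose k * gammaRatio b k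
  have hterm : ∀ k ∈ range (N + 1),
      2 * b * ((-2) ^ k * N.choose k * gammaRatio b k) - 4 * (2 * b + N + 1) *
        ((-2) ^ k * N.choose k * gammaRatio b (k + 1) - (-2) ^ k * N.choose k * gammaRatio b (k + 2))
        = G (k + 1) - G k := by
    intro k hk
    have hkN : k ≤ N := Nat.lt_succ_iff.mp (mem_range.mp hk)
    have hchoose : (N.choose (k + 1) : ℝ) = N.choose k * (N - k) / (k + 1) := by
      rw [eq_div_iff (by positivity), ← Nat.cast_sub hkN]
      exact_mod_cast Nat.choose_succ_right_eq N k
    have h1 : (k : ℝ) + 2 * b ≠ 0 := by positivity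
    have h2 : (k : ℝ) + 1 + 2 * b ≠ 0 := by positivity
    simp only [G, gammaRatio_succ hb]
    push_cast
    rw [hchoose]
    field_simp
    ring
  simp only [binomialSum, mul_sum, ← sum_sub_distrib]
  rw [sum_congr rfl hterm, sum_range_sub]
  simp [G, Nat.choose_succ_self]

theorem binomialSum_gammaRatio_add_two {b : ℝ} (hb : 0 < b) (N : ℕ) :
    (2 * b + N + 1) * binomialSum (-2) (N + 2) (gammaRatio b)
      = (N + 1) * binomialSum (-2) N (gammaRatio b) := by
  rw [binomialSum_add_two]
  linear_combination binomialSum_gammaRatio_contiguous hb N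

theorem binomialSum_two_mul_gammaRatio {b : ℝ} (hb : 0 < b) (m : ℕ) :
    binomialSum (-2) (2 * m) (gammaRatio b)
      = 2 ^ (1 - 2 * b) * Gamma (m + 1 / 2) / Gamma (b + m + 1 / 2) := by
  induction m with
  | zero =>
    have hdup := Gamma_mul_Gamma_add_half_of_pos hb
    have h2b : Gamma (2 * b) ≠ 0 := (Gamma_pos_of_pos (by positivity)).ne'
    simp only [binomialSum, gammaRatio, Nat.cast_zero, zero_add, add_zero, mul_zero, range_one,
      sum_singleton, pow_zero, Nat.choose_self, Nat.cast_one, one_mul, Gamma_one_half_eq]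
    rw [div_eq_div_iff h2b (Gamma_pos_of_pos (by positivity)).ne']
    linear_combination hdup
  | succ m ih =>
    have hrec := binomialSum_gammaRatio_add_two hb (2 * m)
    have hm : (0 : ℝ) < m + 1 / 2 := by positivity
    have hbm : (0 : ℝ) < b + m + 1 / 2 := by positivity
    rw [show 2 * (m + 1) = 2 * m + 2 by ring, ih] at *
    rw [eq_div_iff (Gamma_pos_of_pos (by positivity)).ne']
    push_cast
    rw [show b + (m + 1) + 1 / 2 = (b + m + 1 / 2) + 1 by ring, Gamma_add_one hbm.ne',
      show (m : ℝ) + 1 + 1 / 2 = (m + 1 / 2) + 1 by ring, Gamma_add_one hm.ne']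
    push_cast at hrec ⊢
    field_simp at hrec ⊢
    linear_combination hrec

theorem integral_rpow_mul_exp_neg_half_mul_laguerreL {b : ℝ} (hb : 0 < b) (N : ℕ) :
    ∫ x in Ioi (0 : ℝ), x ^ (b - 1) * exp (-x / 2) * laguerreL N (2 * b - 1) x
      = 2 ^ b * Gamma (N + 2 * b) / N ! * binomialSum (-2) N (gammaRatio b) := by
  set c : ℕ → ℝ := fun k => (-1) ^ k * (Gamma (N + 2 * b) / (Gamma (k + 2 * b) * (N - k)! * k !))
  have hmoment (k : ℕ) :
      ∫ x in Ioi (0 : ℝ), x ^ (k + b - 1) * exp (-x / 2) = 2 ^ (k + b) * Gamma (k + b) :=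
    integral_rpow_mul_exp_neg_half (by positivity)
  have hint (k : ℕ) : IntegrableOn (fun x : ℝ => x ^ (k + b - 1) * exp (-x / 2)) (Ioi 0) :=
    .of_integral_ne_zero (by rw [hmoment]; positivity)
  have hexpand : ∀ x ∈ Ioi (0 : ℝ), x ^ (b - 1) * exp (-x / 2) * laguerreL N (2 * b - 1) x
      = ∑ k ∈ range (N + 1), c k * (x ^ (k + b - 1) * exp (-x / 2)) := by
    intro x hx
    have hshift (y : ℝ) : y + (2 * b - 1) + 1 = y + 2 * b := by ring
    simp only [laguerreL, hshift, mul_sum]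
    refine sum_congr rfl fun k _ => ?_
    rw [show (k : ℝ) + b - 1 = (b - 1) + k by ring, rpow_add hx, rpow_natCast]
    ring
  rw [setIntegral_congr_fun measurableSet_Ioi hexpand,
    integral_finsetSum _ fun k _ => (hint k).const_mul (c k), binomialSum, mul_sum]
  refine sum_congr rfl fun k hk => ?_
  have hkN : k ≤ N := Nat.lt_succ_iff.mp (mem_range.mp hk)
  rw [integral_const_mul, hmoment, rpow_add two_pos, rpow_natCast, Nat.cast_choose ℝ hkN]
  have hG : Gamma (k + 2 * b) ≠ 0 := (Gamma_pos_of_pos (by positivity)).ne'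
  simp only [c, gammaRatio]
  field_simp
  rw [neg_pow (2 : ℝ)]

theorem stmt_18 (N n : ℕ) (hev : Even N) (hnN : N < n) :
    ∫ x in Ioi (0 : ℝ),
        x ^ ((((n : ℝ) - (N : ℝ) - 1) - 1) / 2) * Real.exp (-x / 2) *
          laguerreL N ((n : ℝ) - (N : ℝ) - 1) x
      = 2 ^ ((3 - ((n : ℝ) - (N : ℝ) - 1)) / 2) * Real.Gamma (n : ℝ) *
          Real.Gamma (((N : ℝ) + 3) / 2) /
          (((N : ℝ) + 1) * Real.Gamma ((N : ℝ) + 1) * Real.Gamma (((n : ℝ) + 1) / 2)) := by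
  obtain ⟨m, rfl⟩ := hev
  rw [Gamma_nat_eq_factorial]
  set b : ℝ := (n - (m + m : ℕ)) / 2 with hb_def
  have hb : 0 < b := by
    have : ((m + m : ℕ) : ℝ) < n := by exact_mod_cast hnN
    rw [hb_def]; linarith
  have hα : (n : ℝ) - (m + m : ℕ) - 1 = 2 * b - 1 := by rw [hb_def]; ring
  rw [hα, show (2 * b - 1 - 1) / 2 = b - 1 by ring, integral_rpow_mul_exp_neg_half_mul_laguerreL hb,
    ← two_mul, binomialSum_two_mul_gammaRatio hb]
  push_cast
  rw [show 2 * (m : ℝ) + 2 * b = n by rw [hb_def]; push_cast; ring,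
    show (2 * (m : ℝ) + 3) / 2 = (m + 1 / 2) + 1 by ring, Gamma_add_one (by positivity),
    show b + m + 1 / 2 = (n + 1) / 2 by rw [hb_def]; push_cast; ring,
    show (3 - (2 * b - 1)) / 2 = 1 + (1 - 2 * b) + b by ring, rpow_add two_pos, rpow_add two_pos]
  field_simp
  ring
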